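/- arXiv:0712.3953 — 2 statements merged into one kernel-verified Lean document; each statement's English description precedes it below -/
import Mathlib

section
/- Let φ_1,...,φ_n ∈ ℂ be nonzero and pairwise distinct, and r = Σ_{i≠j} (1/(φ_i-φ_j)) (φ_i e^i_j - φ_j e^j_j) ⊗ (e^j_i - e^i_i). Then r satisfies the non-homogeneous associative classical Yang–Baxter equation r^{13} r^{12} - r^{12} r^{23} + r^{23} r^{13} = -r^{13}. -/
open Matrix Kronecker BigOperators Finset

noncomputable section


/-- The classical r-matrix `r = Σ_{i≠j} (φ_i-φ_j)⁻¹ (φ_i e^i_j - φ_j e^j_j) ⊗ (e^j_i - e^i_i)`,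
viewed as an operator on ℂⁿ⊗ℂⁿ via the Kronecker product. -/
def rPhi (n : ℕ) (φ : Fin n → ℂ) : Matrix (Fin n × Fin n) (Fin n × Fin n) ℂ :=
  ∑ i : Fin n, ∑ j : Fin n, if i ≠ j then
    (φ i - φ j)⁻¹ • ((φ i • single i j (1:ℂ) - φ j • single j j (1:ℂ)) ⊗ₖ
      (single j i (1:ℂ) - single i i (1:ℂ))) else 0

/-- `r ⊗ 1` acting on the first two factors of ℂⁿ⊗ℂⁿ⊗ℂⁿ. -/
def op12 (n : ℕ) (r : Matrix (Fin n × Fin n) (Fin n × Fin n) ℂ) :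
    Matrix (Fin n × Fin n × Fin n) (Fin n × Fin n × Fin n) ℂ := fun p q =>
  r (p.1, p.2.1) (q.1, q.2.1) * (if p.2.2 = q.2.2 then 1 else 0)

/-- `1 ⊗ r` acting on the last two factors of ℂⁿ⊗ℂⁿ⊗ℂⁿ. -/
def op23 (n : ℕ) (r : Matrix (Fin n × Fin n) (Fin n × Fin n) ℂ) :
    Matrix (Fin n × Fin n × Fin n) (Fin n × Fin n × Fin n) ℂ := fun p q =>
  r p.2 q.2 * (if p.1 = q.1 then 1 else 0)

/-- `r` acting on the first and third factors of ℂⁿ⊗ℂⁿ⊗ℂⁿ. -/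
def op13 (n : ℕ) (r : Matrix (Fin n × Fin n) (Fin n × Fin n) ℂ) :
    Matrix (Fin n × Fin n × Fin n) (Fin n × Fin n × Fin n) ℂ := fun p q =>
  r (p.1, p.2.2) (q.1, q.2.2) * (if p.2.1 = q.2.1 then 1 else 0)

/-!
In the basis `e_c ⊗ e_d` the r-matrix acts by
`r (e_c ⊗ e_d) = (φ_d e_d - φ_c e_c) ⊗ (e_c - e_d) / (φ_d - φ_c)`, so applied to `e_x ⊗ e_y ⊗ e_z`
each of the three products only meets basis vectors indexed by `{x, y, z}`. Every entry of the
equation is therefore a sum of at most six products of entries of `r`, and the equation becomes a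
rational identity in `φ_x, φ_y, φ_z`, checked according to which of `x, y, z` coincide.
-/

section
variable {K ι : Type*} [Field K] [DecidableEq ι]

def kdelta (i j : ι) : K := if i = j then 1 else 0

@[simp] lemma kdelta_self (i : ι) : (kdelta i i : K) = 1 := if_pos rfl

@[simp] lemma kdelta_of_ne {i j : ι} (h : i ≠ j) : (kdelta i j : K) = 0 := if_neg h

/-- At `c = d` the entry is `0`, both through the numerator and through `x / 0 = 0`. -/
def rEntry (φ : ι → K) (a b c d : ι) : K :=
  (φ d * kdelta a d - φ c * kdelta a c) * (kdelta b c - kdelta b d) / (φ d - φ c)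

variable (φ : ι → K)

@[simp] lemma rEntry_diag (a b c : ι) : rEntry φ a b c c = 0 := by simp [rEntry]

lemma rEntry_of_ne_of_ne_fst {a c d : ι} (hc : a ≠ c) (hd : a ≠ d) (b : ι) :
    rEntry φ a b c d = 0 := by simp [rEntry, hc, hd]

lemma rEntry_of_ne_of_ne_snd {b c d : ι} (hc : b ≠ c) (hd : b ≠ d) (a : ι) :
    rEntry φ a b c d = 0 := by simp [rEntry, hc, hd]

variable [Fintype ι]

lemma sum_mul_rEntry_fst (g : ι → K) (b c d : ι) :
    ∑ u, g u * rEntry φ u b c d = g c * rEntry φ c b c d + g d * rEntry φ d b c d := by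
  rcases eq_or_ne c d with rfl | hcd
  · simp
  · refine Fintype.sum_eq_add c d hcd fun u hu => ?_
    rw [rEntry_of_ne_of_ne_fst φ hu.1 hu.2, mul_zero]

lemma sum_mul_rEntry_snd (g : ι → K) (a c d : ι) :
    ∑ w, g w * rEntry φ a w c d = g c * rEntry φ a c c d + g d * rEntry φ a d c d := by
  rcases eq_or_ne c d with rfl | hcd
  · simp
  · refine Fintype.sum_eq_add c d hcd fun u hu => ?_
    rw [rEntry_of_ne_of_ne_snd φ hu.1 hu.2, mul_zero]

theorem rEntry_acYB (hφ : Function.Injective φ) (a b c x y z : ι) :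
    (∑ u, rEntry φ a c u z * rEntry φ u b x y) - (∑ v, rEntry φ a b x v * rEntry φ v c y z)
      + (∑ w, rEntry φ b c y w * rEntry φ a w x z)
    = -(rEntry φ a c x z * kdelta b y) := by
  rw [sum_mul_rEntry_fst, sum_mul_rEntry_fst, sum_mul_rEntry_snd]
  have hsub : ∀ {i j}, i ≠ j → φ i - φ j ≠ 0 := fun h => sub_ne_zero.2 (hφ.ne h)
  rcases eq_or_ne x y with rfl | hxy
  · rcases eq_or_ne x z with rfl | hxz
    · simp
    · simp only [rEntry, kdelta_self, kdelta_of_ne hxz, kdelta_of_ne hxz.symm, sub_self, div_zero]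
      field_simp [hsub hxz, hsub hxz.symm]
      ring
  · rcases eq_or_ne y z with rfl | hyz
    · simp only [rEntry, kdelta_self, kdelta_of_ne hxy, kdelta_of_ne hxy.symm, sub_self, div_zero]
      field_simp [hsub hxy, hsub hxy.symm]
      ring
    · rcases eq_or_ne x z with rfl | hxz
      · simp only [rEntry, kdelta_self, kdelta_of_ne hxy, kdelta_of_ne hxy.symm, sub_self,
          div_zero]
        field_simp [hsub hxy, hsub hxy.symm]
        ring
      · simp only [rEntry, kdelta_self, kdelta_of_ne hxy, kdelta_of_ne hxy.symm,
          kdelta_of_ne hyz, kdelta_of_ne hyz.symm, kdelta_of_ne hxz, kdelta_of_ne hxz.symm]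
        field_simp [hsub hxy, hsub hxy.symm, hsub hxz, hsub hxz.symm, hsub hyz, hsub hyz.symm]
        ring
end

lemma rPhi_apply (n : ℕ) (φ : Fin n → ℂ) (a b c d : Fin n) :
    rPhi n φ (a, b) (c, d) = rEntry φ a b c d := by
  simp only [rPhi, Matrix.sum_apply]
  rw [Fintype.sum_eq_single d fun i hi => Fintype.sum_eq_zero _ fun j => ?_,
    Fintype.sum_eq_single c fun j hj => ?_]
  · rcases eq_or_ne d c with rfl | hdc
    · simp
    · simp [hdc, rEntry, kdelta, single_apply, eq_comm, div_eq_inv_mul]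
  · split_ifs <;> simp [single_apply, hj]
  · split_ifs <;> simp [single_apply, hi]

section
variable {n : ℕ} (r : Matrix (Fin n × Fin n) (Fin n × Fin n) ℂ) (a b c x y z : Fin n)

lemma op13_mul_op12_apply :
    (op13 n r * op12 n r) (a, b, c) (x, y, z) = ∑ u, r (a, c) (u, z) * r (u, b) (x, y) := by
  simp [Matrix.mul_apply, op13, op12, Fintype.sum_prod_type]

lemma op12_mul_op23_apply :
    (op12 n r * op23 n r) (a, b, c) (x, y, z) = ∑ v, r (a, b) (x, v) * r (v, c) (y, z) := by
  simp [Matrix.mul_apply, op23, op12, Fintype.sum_prod_type]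

lemma op23_mul_op13_apply :
    (op23 n r * op13 n r) (a, b, c) (x, y, z) = ∑ w, r (b, c) (y, w) * r (a, w) (x, z) := by
  simp [Matrix.mul_apply, op23, op13, Fintype.sum_prod_type]

end

theorem rPhi_nonhomogeneous_acYB_general (n : ℕ) (φ : Fin n → ℂ)
    (hd : ∀ i j, i ≠ j → φ i ≠ φ j) :
    op13 n (rPhi n φ) * op12 n (rPhi n φ) - op12 n (rPhi n φ) * op23 n (rPhi n φ)
      + op23 n (rPhi n φ) * op13 n (rPhi n φ) = -(op13 n (rPhi n φ)) := by
  have hφ : Function.Injective φ := fun i j h => by_contra fun hij => hd i j hij h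
  ext ⟨a, b, c⟩ ⟨x, y, z⟩
  simp only [Matrix.add_apply, Matrix.sub_apply, Matrix.neg_apply, op13_mul_op12_apply,
    op12_mul_op23_apply, op23_mul_op13_apply, op13, rPhi_apply]
  exact rEntry_acYB φ hφ a b c x y z

/-- `r` satisfies the non-homogeneous associative classical Yang–Baxter equation
`r¹³ r¹² - r¹² r²³ + r²³ r¹³ = -r¹³`. -/
theorem rPhi_nonhomogeneous_acYB (n : ℕ) (φ : Fin n → ℂ)
    (h0 : ∀ i, φ i ≠ 0) (hd : ∀ i j, i ≠ j → φ i ≠ φ j) :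
    op13 n (rPhi n φ) * op12 n (rPhi n φ) - op12 n (rPhi n φ) * op23 n (rPhi n φ)
      + op23 n (rPhi n φ) * op13 n (rPhi n φ) = -(op13 n (rPhi n φ)) :=
  rPhi_nonhomogeneous_acYB_general n φ hd
end
end

section
/- Let φ_1,...,φ_n ∈ ℂ be nonzero and pairwise distinct, β = 1 - q^{-2}, and let R̂ be the rime solution with β_{ij} = βφ_i/(φ_i-φ_j). Let X = X(φ) be the matrix with entries X^k_j = e_{j-1}(φ_1,...,φ̂_k,...,φ_n). Then R̂ = (X⊗X) R̂_{CG,1} (X^{-1}⊗X^{-1}), where R̂_{CG,1} is the Cremmer–Gervais matrix with p = 1. -/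
open Matrix Kronecker BigOperators Finset

noncomputable section


/-- The rime matrix R̂ on ℂⁿ⊗ℂⁿ with parameters `b i j = β_{ij}` (form (3) of the paper):
`R̂^{ij}_{kl} = (1-b_{ji})δ^i_l δ^j_k + b_{ij}δ^i_k δ^j_l - b_{ij}δ^i_k δ^i_l + b_{ji}δ^j_k δ^j_l`.
Row index `p = (i,j)` (upper indices), column index `q = (k,l)` (lower indices). -/
def rimeR (n : ℕ) (b : Fin n → Fin n → ℂ) :
    Matrix (Fin n × Fin n) (Fin n × Fin n) ℂ := fun p q =>
  (1 - b p.2 p.1) * (if p.1 = q.2 then 1 else 0) * (if p.2 = q.1 then 1 else 0)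
  + b p.1 p.2 * (if p.1 = q.1 then 1 else 0) * (if p.2 = q.2 then 1 else 0)
  - b p.1 p.2 * (if p.1 = q.1 then 1 else 0) * (if p.1 = q.2 then 1 else 0)
  + b p.2 p.1 * (if p.2 = q.1 then 1 else 0) * (if p.2 = q.2 then 1 else 0)

/-- `β_{ij} = β φ_i / (φ_i - φ_j)` for `i ≠ j`, and `β_{ii} = 0`. -/
def bphi (n : ℕ) (β : ℂ) (φ : Fin n → ℂ) : Fin n → Fin n → ℂ := fun i j =>
  if i = j then 0 else β * φ i / (φ i - φ j)

/-- The Cremmer–Gervais matrix with `p = 1` (rescaled, eigenvalues `1`, `-q⁻²`):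
`(R̂_CG)^{ij}_{kl} = q^{-2θ(i>j)} δ^i_l δ^j_k + (1-q⁻²) Σ_{i≤s<j} δ^s_k δ^{i+j-s}_l
 - (1-q⁻²) Σ_{j<s<i} δ^s_k δ^{i+j-s}_l`.
The conditions `s = k`, `i+j-s = l` are rewritten as `k`-range conditions together with
`i + j = k + l` (as natural numbers, which also makes `δ^{i+j-s}_l` vanish out of range). -/
def cgR (n : ℕ) (q : ℂ) : Matrix (Fin n × Fin n) (Fin n × Fin n) ℂ := fun p r =>
  (if p.2 < p.1 then (q ^ 2)⁻¹ else 1)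
      * (if p.1 = r.2 then 1 else 0) * (if p.2 = r.1 then 1 else 0)
  + (1 - (q ^ 2)⁻¹) *
      (if p.1 ≤ r.1 ∧ r.1 < p.2 ∧ (p.1 : ℕ) + (p.2 : ℕ) = (r.1 : ℕ) + (r.2 : ℕ) then 1 else 0)
  - (1 - (q ^ 2)⁻¹) *
      (if p.2 < r.1 ∧ r.1 < p.1 ∧ (p.1 : ℕ) + (p.2 : ℕ) = (r.1 : ℕ) + (r.2 : ℕ) then 1 else 0)

/-- The matrix `X(φ)` with entries `X^k_j = e_{j-1}(φ_1, …, φ̂_k, …, φ_n)`: row `k`, column `j`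
(0-indexed here, so column `j` carries the elementary symmetric polynomial of degree `j`)
in the `n-1` values `φ` with the `k`-th one omitted. -/
def Xmat (n : ℕ) (φ : Fin n → ℂ) : Matrix (Fin n) (Fin n) ℂ := fun k j =>
  (((Finset.univ.erase k).val.map φ).esymm (j : ℕ))

/-! Multiplying on the right by `X ⊗ X`, it suffices to show `R̂ (X ⊗ X) = (X ⊗ X) R̂_CG` and that
`X` is invertible. For the latter, Vieta's formula shows that `X` times the matrix
`((-φ_l)^(n-1-j))_{j,l}` is diagonal with entries `∏_{m ≠ k} (φ_m - φ_k)`.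

For the entry `((i,j),(a,b))`, write `x = e(φ̂_i)`, `y = e(φ̂_j)` and `Y = e(φ̂_i, φ̂_j)`, so that
`x_{m+1} = Y_{m+1} + φ_j Y_m` and `y_{m+1} = Y_{m+1} + φ_i Y_m`. The Cremmer–Gervais side is
`x_b y_a` plus `β` times the antidiagonal sum `∑_{m ≤ a, m < b} (x_m y_{a+b-m} - y_m x_{a+b-m})`,
which telescopes to `(φ_i - φ_j) Y_a Y_{b-1}`. The rime side is `x_b y_a` plus
`(y_b - x_b)(β_{ij} x_a + β_{ji} y_a) = (φ_i - φ_j) Y_{b-1} · β Y_a`, since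
`φ_i x_a - φ_j y_a = (φ_i - φ_j) Y_a`. -/

namespace Multiset

variable {R : Type*}

section CommSemiring

variable [CommSemiring R]

lemma esymm_zero (s : Multiset R) : s.esymm 0 = 1 := by
  simp [esymm]

lemma esymm_eq_zero_of_card_lt {s : Multiset R} {m : ℕ} (h : card s < m) : s.esymm m = 0 := by
  simp [esymm, powersetCard_eq_empty _ h]

lemma esymm_cons_succ (a : R) (s : Multiset R) (m : ℕ) :
    (a ::ₘ s).esymm (m + 1) = s.esymm (m + 1) + a * s.esymm m := by
  simp only [esymm, powersetCard_cons, map_add, sum_add, map_map, Function.comp_def, prod_cons,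
    sum_map_mul_left]

end CommSemiring

variable [CommRing R]

lemma sum_range_esymm_cons_antisymm (s : Multiset R) (u v : R) (k d : ℕ) :
    ∑ m ∈ Finset.range (k + 1), ((v ::ₘ s).esymm m * (u ::ₘ s).esymm (k + d + 1 - m)
        - (u ::ₘ s).esymm m * (v ::ₘ s).esymm (k + d + 1 - m))
      = (u - v) * (s.esymm k * s.esymm d) := by
  induction k generalizing d with
  | zero =>
    simp only [zero_add, Finset.sum_range_one, Nat.sub_zero, esymm_zero, esymm_cons_succ]
    ring
  | succ k ih =>
    rw [Finset.sum_range_succ, show k + 1 + d + 1 = k + (d + 1) + 1 by omega, ih,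
      show k + (d + 1) + 1 - (k + 1) = d + 1 by omega]
    simp only [esymm_cons_succ]
    ring

lemma sub_mul_sum_range_esymm_cons_antisymm (s : Multiset R) (u v : R) (a b : ℕ) :
    (u - v) * ∑ m ∈ Finset.range (min (a + 1) b), ((v ::ₘ s).esymm m * (u ::ₘ s).esymm (a + b - m)
        - (u ::ₘ s).esymm m * (v ::ₘ s).esymm (a + b - m))
      = ((u ::ₘ s).esymm b - (v ::ₘ s).esymm b)
        * (u * (v ::ₘ s).esymm a - v * (u ::ₘ s).esymm a) := by
  have hdiff : u * (v ::ₘ s).esymm a - v * (u ::ₘ s).esymm a = (u - v) * s.esymm a := by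
    cases a with
    | zero => simp only [esymm_zero]; ring
    | succ a => simp only [esymm_cons_succ]; ring
  cases b with
  | zero => simp [esymm_zero]
  | succ b =>
    have hsum : ∑ m ∈ Finset.range (min (a + 1) (b + 1)), ((v ::ₘ s).esymm m
        * (u ::ₘ s).esymm (a + (b + 1) - m) - (u ::ₘ s).esymm m * (v ::ₘ s).esymm (a + (b + 1) - m))
        = (u - v) * (s.esymm a * s.esymm b) := by
      rcases lt_or_ge a (b + 1) with hab | hab
      · rw [min_eq_left (by omega), ← add_assoc, sum_range_esymm_cons_antisymm]
      · rw [min_eq_right (by omega), show a + (b + 1) = b + a + 1 by omega,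
          sum_range_esymm_cons_antisymm, mul_comm (s.esymm b)]
    rw [hsum, hdiff, esymm_cons_succ, esymm_cons_succ]
    ring

end Multiset

section SumLemmas

variable {M : Type*} [AddCommMonoid M]

lemma sum_range_min_succ_left (f : ℕ → M) (a b : ℕ) :
    ∑ m ∈ range (min (a + 1) b), f m = ∑ m ∈ range (min a b), f m + if a < b then f a else 0 := by
  split_ifs with h
  · rw [min_eq_left h, min_eq_left h.le, sum_range_succ]
  · rw [min_eq_right (by omega), min_eq_right (by omega), add_zero]

lemma sum_fin_sum_fin_ite_add_eq_sum_range {n t c : ℕ} (F : ℕ → ℕ → M)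
    (hF : ∀ k l, n ≤ l → F k l = 0) (htn : t ≤ n) (htc : t ≤ c + 1) :
    ∑ k : Fin n, ∑ l : Fin n, (if (k : ℕ) < t ∧ (k : ℕ) + l = c then F k l else 0)
      = ∑ m ∈ range t, F m (c - m) := by
  have inner (k : ℕ) : ∑ l : Fin n, (if k < t ∧ k + l = c then F k l else 0)
      = if k < t then F k (c - k) else 0 := by
    rw [Fin.sum_univ_eq_sum_range (fun l => if k < t ∧ k + l = c then F k l else 0)]
    split_ifs with hk
    · have hcond (l : ℕ) : (k < t ∧ k + l = c) ↔ c - k = l := by omega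
      simp_rw [hcond, sum_ite_eq, mem_range]
      split_ifs with hl
      · rfl
      · exact (hF k (c - k) (not_lt.mp hl)).symm
    · exact sum_eq_zero fun l _ => if_neg fun h => hk h.1
  simp_rw [inner]
  rw [Fin.sum_univ_eq_sum_range (fun k => if k < t then F k (c - k) else 0), ← sum_filter]
  congr 1
  ext k
  simp only [mem_filter, mem_range]
  omega

end SumLemmas

section Xmat

variable {n : ℕ} (φ : Fin n → ℂ)

def erasedValues (k : Fin n) : Multiset ℂ := (univ.erase k).val.map φ

lemma Xmat_apply (k j : Fin n) : Xmat n φ k j = (erasedValues φ k).esymm j := rfl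

lemma card_erasedValues (k : Fin n) : Multiset.card (erasedValues φ k) = n - 1 := by
  simp [erasedValues]

lemma esymm_erasedValues_eq_zero (k : Fin n) {m : ℕ} (hm : n ≤ m) :
    (erasedValues φ k).esymm m = 0 :=
  Multiset.esymm_eq_zero_of_card_lt (by rw [card_erasedValues]; have := k.pos; omega)

lemma erasedValues_eq_cons {i j : Fin n} (hij : i ≠ j) :
    erasedValues φ i = φ j ::ₘ ((univ.erase i).erase j).val.map φ := by
  have hj : j ∈ univ.erase i := mem_erase.2 ⟨hij.symm, mem_univ j⟩
  conv_lhs => rw [erasedValues, ← insert_erase hj]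
  rw [insert_val_of_notMem (notMem_erase j _), Multiset.map_cons]

lemma sum_esymm_erasedValues_mul_pow (k : Fin n) (x : ℂ) :
    ∑ j : Fin n, (erasedValues φ k).esymm j * x ^ (n - 1 - j) = ∏ m ∈ univ.erase k, (x + φ m) := by
  have h := congrArg (Polynomial.eval x) (Multiset.prod_X_add_C_eq_sum_esymm (erasedValues φ k))
  rw [Polynomial.eval_multiset_prod, Polynomial.eval_finsetSum, card_erasedValues,
    Nat.sub_add_cancel k.pos] at h
  rw [Fin.sum_univ_eq_sum_range (fun j => (erasedValues φ k).esymm j * x ^ (n - 1 - j))]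
  simpa [erasedValues, Finset.prod_eq_multiset_prod] using h.symm

lemma isUnit_det_Xmat (hφ : Function.Injective φ) : IsUnit (Xmat n φ).det := by
  let W : Matrix (Fin n) (Fin n) ℂ := of fun j l => (-φ l) ^ (n - 1 - j)
  have hXW : Xmat n φ * W = diagonal fun k => ∏ m ∈ univ.erase k, (φ m - φ k) := by
    ext k l
    simp only [mul_apply, Xmat_apply, W, of_apply, sum_esymm_erasedValues_mul_pow, diagonal_apply,
      neg_add_eq_sub]
    split_ifs with hkl
    · rw [hkl]
    · exact prod_eq_zero (mem_erase.2 ⟨Ne.symm hkl, mem_univ l⟩) (sub_self _)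
  have hprod : (Xmat n φ).det * W.det = ∏ k, ∏ m ∈ univ.erase k, (φ m - φ k) := by
    rw [← det_mul, hXW, det_diagonal]
  have hne : ∏ k, ∏ m ∈ univ.erase k, (φ m - φ k) ≠ 0 :=
    prod_ne_zero_iff.2 fun k _ => prod_ne_zero_iff.2 fun m hm =>
      sub_ne_zero.2 (hφ.ne (ne_of_mem_erase hm))
  exact isUnit_iff_ne_zero.2 (left_ne_zero_of_mul (hprod ▸ hne))

end Xmat

section Entries

variable {n : ℕ} (X : Matrix (Fin n) (Fin n) ℂ)

lemma rimeR_mul_kronecker_apply (B : Fin n → Fin n → ℂ) (i j a b : Fin n) :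
    (rimeR n B * (X ⊗ₖ X)) (i, j) (a, b)
      = (1 - B j i) * (X j a * X i b) + B i j * (X i a * X j b)
        - B i j * (X i a * X i b) + B j i * (X j a * X j b) := by
  rw [mul_apply, Fintype.sum_prod_type]
  simp only [rimeR, kroneckerMap_apply, ite_mul, mul_ite, zero_mul, mul_zero, one_mul, mul_one,
    add_mul, sub_mul, sum_add_distrib, sum_sub_distrib, sum_ite_irrel, sum_const_zero, sum_ite_eq,
    mem_univ, if_true]

lemma kronecker_mul_cgR_apply (q : ℂ) (i j a b : Fin n) :
    ((X ⊗ₖ X) * cgR n q) (i, j) (a, b)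
      = (if a < b then (q ^ 2)⁻¹ else 1) * (X i b * X j a)
        + (1 - (q ^ 2)⁻¹) * ∑ k : Fin n, ∑ l : Fin n,
            (if k ≤ a ∧ a < l ∧ (k : ℕ) + l = a + b then X i k * X j l else 0)
        - (1 - (q ^ 2)⁻¹) * ∑ k : Fin n, ∑ l : Fin n,
            (if l < a ∧ a < k ∧ (k : ℕ) + l = a + b then X i k * X j l else 0) := by
  rw [mul_apply, Fintype.sum_prod_type]
  simp only [cgR, kroneckerMap_apply, ite_mul, mul_ite, mul_zero, one_mul, mul_one, mul_add,
    mul_sub, sum_add_distrib, sum_sub_distrib, mul_sum, sum_ite_eq', mem_univ, if_true]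
  refine congrArg₂ (· - ·) (congrArg₂ (· + ·) (by split <;> ring) ?_) ?_ <;>
    exact sum_congr rfl fun k _ => sum_congr rfl fun l _ => by split <;> ring

end Entries

section Intertwining

variable {n : ℕ} {φ : Fin n → ℂ}

lemma bphi_mul_esymm_eq_antidiagonal_sum (hφ : Function.Injective φ) (β : ℂ) (i j : Fin n)
    (a b : ℕ) :
    ((erasedValues φ j).esymm b - (erasedValues φ i).esymm b)
        * (bphi n β φ i j * (erasedValues φ i).esymm a
          + bphi n β φ j i * (erasedValues φ j).esymm a)
      = β * ∑ m ∈ range (min (a + 1) b),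
          ((erasedValues φ i).esymm m * (erasedValues φ j).esymm (a + b - m)
            - (erasedValues φ j).esymm m * (erasedValues φ i).esymm (a + b - m)) := by
  by_cases hij : i = j
  · simp [hij, bphi]
  have hsub : φ i - φ j ≠ 0 := sub_ne_zero.2 (hφ.ne hij)
  have key := Multiset.sub_mul_sum_range_esymm_cons_antisymm
    (((univ.erase i).erase j).val.map φ) (φ i) (φ j) a b
  rw [erasedValues_eq_cons φ hij, erasedValues_eq_cons φ (Ne.symm hij), erase_right_comm]
  simp only [bphi, if_neg hij, if_neg (Ne.symm hij)]
  rw [show φ j - φ i = -(φ i - φ j) by ring]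
  field_simp
  linear_combination (-β) * key

lemma rimeR_mul_kronecker_Xmat (hφ : Function.Injective φ) (q : ℂ) :
    rimeR n (bphi n (1 - (q ^ 2)⁻¹) φ) * (Xmat n φ ⊗ₖ Xmat n φ)
      = (Xmat n φ ⊗ₖ Xmat n φ) * cgR n q := by
  ext ⟨i, j⟩ ⟨a, b⟩
  rw [rimeR_mul_kronecker_apply, kronecker_mul_cgR_apply]
  simp only [Xmat_apply]
  have key := bphi_mul_esymm_eq_antidiagonal_sum hφ (1 - (q ^ 2)⁻¹) i j a b
  rw [sum_sub_distrib] at key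
  set x := (erasedValues φ i).esymm
  set y := (erasedValues φ j).esymm
  have hy_vanish (k l : ℕ) (hl : n ≤ l) : x k * y l = 0 := by
    simp [y, esymm_erasedValues_eq_zero φ j hl]
  have hx_vanish (l k : ℕ) (hk : n ≤ k) : y l * x k = 0 := by
    simp [x, esymm_erasedValues_eq_zero φ i hk]
  have hP : ∑ k : Fin n, ∑ l : Fin n,
        (if k ≤ a ∧ a < l ∧ (k : ℕ) + l = a + b then x k * y l else 0)
      = ∑ m ∈ range (min (a + 1 : ℕ) b), x m * y (a + b - m) := by
    rw [← sum_fin_sum_fin_ite_add_eq_sum_range (fun k l => x k * y l) hy_vanish (by omega)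
      (by omega)]
    refine sum_congr rfl fun k _ => sum_congr rfl fun l _ => if_congr ?_ rfl rfl
    simp only [Fin.le_def, Fin.lt_def]
    omega
  have hN : ∑ k : Fin n, ∑ l : Fin n,
        (if l < a ∧ a < k ∧ (k : ℕ) + l = a + b then x k * y l else 0)
      = ∑ m ∈ range (min (a : ℕ) b), y m * x (a + b - m) := by
    rw [sum_comm, ← sum_fin_sum_fin_ite_add_eq_sum_range (fun l k => y l * x k) hx_vanish
      (by omega) (by omega)]
    refine sum_congr rfl fun l _ => sum_congr rfl fun k _ => if_congr ?_ (mul_comm _ _) rfl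
    simp only [Fin.lt_def]
    omega
  have hsplit := sum_range_min_succ_left (fun m => y m * x (a + b - m)) a b
  rw [Nat.add_sub_cancel_left] at hsplit
  rw [hP, hN]
  simp only [Fin.lt_def]
  split_ifs at hsplit ⊢ <;> linear_combination key - (1 - (q ^ 2)⁻¹) * hsplit

end Intertwining

theorem rime_eq_conj_cg_general (n : ℕ) (φ : Fin n → ℂ) (q : ℂ)
    (hd : ∀ i j, i ≠ j → φ i ≠ φ j) :
    rimeR n (bphi n (1 - (q ^ 2)⁻¹) φ)
      = (Xmat n φ ⊗ₖ Xmat n φ) * cgR n q * ((Xmat n φ)⁻¹ ⊗ₖ (Xmat n φ)⁻¹) := by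
  have hφ : Function.Injective φ := fun i j h => by_contra fun hij => hd i j hij h
  have hX := isUnit_det_Xmat φ hφ
  have hXX : IsUnit (Xmat n φ ⊗ₖ Xmat n φ).det := by
    rw [det_kronecker]
    exact (hX.pow _).mul (hX.pow _)
  rw [← inv_kronecker, ← rimeR_mul_kronecker_Xmat hφ q, mul_nonsing_inv_cancel_right _ _ hXX]

/-- The rime solution with `β_{ij} = β φ_i/(φ_i-φ_j)`, `β = 1 - q⁻²`, is conjugate to the
Cremmer–Gervais matrix: `R̂ = (X ⊗ X) R̂_{CG,1} (X⁻¹ ⊗ X⁻¹)` where `X = X(φ)`. -/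
theorem rime_eq_conj_cg (n : ℕ) (φ : Fin n → ℂ) (q : ℂ) (hq : q ≠ 0)
    (h0 : ∀ i, φ i ≠ 0) (hd : ∀ i j, i ≠ j → φ i ≠ φ j) :
    rimeR n (bphi n (1 - (q ^ 2)⁻¹) φ)
      = (Xmat n φ ⊗ₖ Xmat n φ) * cgR n q * ((Xmat n φ)⁻¹ ⊗ₖ (Xmat n φ)⁻¹) :=
  rime_eq_conj_cg_general n φ q hd
end
end
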